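/- arXiv:0810.0084 — 4 statements merged into one kernel-verified Lean document; each statement's English description precedes it below -/
import Mathlib

section
/- Let (H, t) be a half-ribbon Hopf algebra over a field F. Then the conjugation map C_t : x ↦ t·x·t⁻¹ is a coalgebra anti-automorphism of H; that is, for every x ∈ H one has Δ(t·x·t⁻¹) = (t ⊗ t)·τ(Δ(x))·(t⁻¹ ⊗ t⁻¹) in H ⊗ H. -/
open TensorProduct

section HalfRibbonDefs

variable (F : Type*) [Field F] (H : Type*) [Ring H] [HopfAlgebra F H]

/-- Comultiplication as an algebra homomorphism. -/
noncomputable abbrev Δ : H →ₐ[F] H ⊗[F] H := Bialgebra.comulAlgHom F H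

/-- Counit as an algebra homomorphism. -/
noncomputable abbrev ε : H →ₐ[F] F := Bialgebra.counitAlgHom F H

/-- Antipode. -/
noncomputable abbrev antipodeS : H →ₗ[F] H := HopfAlgebra.antipode (R := F)

/-- The flip `a ⊗ b ↦ b ⊗ a` as an algebra automorphism of `H ⊗ H`. -/
noncomputable abbrev τ : H ⊗[F] H ≃ₐ[F] H ⊗[F] H := Algebra.TensorProduct.comm F H H

/-- The map `m ∘ (S ⊗ id) : H ⊗ H → H`, `a ⊗ b ↦ S(a)·b`, applied after flipping.
`drinfeld R = m∘(S ⊗ id)(τ(R))` is the Drinfeld element. -/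
noncomputable def drinfeld (R : H ⊗[F] H) : H :=
  LinearMap.mul' F H ((TensorProduct.map (antipodeS F H) LinearMap.id) (τ F H R))

/-- `R ∈ H ⊗ H` is a universal R-matrix. -/
def IsUniversalRMatrix (R : H ⊗[F] H) : Prop :=
  IsUnit R ∧
  (∀ x : H, R * Δ F H x = τ F H (Δ F H x) * R) ∧
  (Algebra.TensorProduct.map (Δ F H) (AlgHom.id F H)) R
    = (Algebra.TensorProduct.map (Algebra.TensorProduct.includeLeft (R := F) (S := F)) (AlgHom.id F H)) R
      * (Algebra.TensorProduct.map (Algebra.TensorProduct.includeRight (R := F) (A := H) (B := H)) (AlgHom.id F H)) R ∧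
  (Algebra.TensorProduct.map (AlgHom.id F H) (Δ F H)) R
    = (Algebra.TensorProduct.map (AlgHom.id F H) (Algebra.TensorProduct.includeRight (R := F) (A := H) (B := H))) R
      * (Algebra.TensorProduct.map (AlgHom.id F H) (Algebra.TensorProduct.includeLeft (R := F) (S := F))) R ∧
  (Algebra.TensorProduct.lid F H) ((Algebra.TensorProduct.map (ε F H) (AlgHom.id F H)) R) = 1 ∧
  (Algebra.TensorProduct.rid F F H) ((Algebra.TensorProduct.map (AlgHom.id F H) (ε F H)) R) = 1

/-- `v` is a ribbon element for the quasi-triangular Hopf algebra `(H, R)`. -/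
def IsRibbonElement (R : H ⊗[F] H) (v : H) : Prop :=
  IsUnit v ∧
  (∀ x : H, v * x = x * v) ∧
  v * v = drinfeld F H R * antipodeS F H (drinfeld F H R) ∧
  antipodeS F H v = v ∧
  ε F H v = 1 ∧
  Δ F H v = (v ⊗ₜ[F] v) * Ring.inverse (τ F H R * R)

/-- `(H, t)` is a half-ribbon Hopf algebra:  `R := (t⁻¹ ⊗ t⁻¹)·Δ(t)` is a universal
R-matrix and `v := t⁻²` is a ribbon element for `(H, R)`. -/
def IsHalfRibbonElement (t : Hˣ) : Prop :=
  IsUniversalRMatrix F H ((((t⁻¹ : Hˣ) : H) ⊗ₜ[F] ((t⁻¹ : Hˣ) : H)) * Δ F H (t : H)) ∧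
  IsRibbonElement F H ((((t⁻¹ : Hˣ) : H) ⊗ₜ[F] ((t⁻¹ : Hˣ) : H)) * Δ F H (t : H))
    (((t⁻¹ : Hˣ) : H) * ((t⁻¹ : Hˣ) : H))

end HalfRibbonDefs

/-- For a half-ribbon Hopf algebra `(H, t)`, conjugation by `t` is a
coalgebra anti-automorphism: `Δ(t·x·t⁻¹) = (t ⊗ t)·τ(Δ(x))·(t⁻¹ ⊗ t⁻¹)` for all `x`. -/
theorem conj_halfRibbon_coalgebra_antiAut
    (F : Type*) [Field F] (H : Type*) [Ring H] [HopfAlgebra F H]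
    (t : Hˣ) (ht : IsHalfRibbonElement F H t) :
    ∀ x : H,
      Δ F H ((t : H) * x * ((t⁻¹ : Hˣ) : H)) =
        (((t : H) ⊗ₜ[F] (t : H)) * τ F H (Δ F H x)) *
          (((t⁻¹ : Hˣ) : H) ⊗ₜ[F] ((t⁻¹ : Hˣ) : H)) := by
  intro x
  have key := ht.1.2.1 x
  have htt : ((t : H) ⊗ₜ[F] (t : H)) * (((t⁻¹ : Hˣ) : H) ⊗ₜ[F] ((t⁻¹ : Hˣ) : H)) = 1 := by
    rw [Algebra.TensorProduct.tmul_mul_tmul, Units.mul_inv, Algebra.TensorProduct.one_def]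
  have hΔt : Δ F H (t : H) * Δ F H ((t⁻¹ : Hˣ) : H) = 1 := by
    rw [← map_mul, Units.mul_inv, map_one]
  have key2 := congrArg
    (fun z => (((t : H) ⊗ₜ[F] (t : H)) * z) * Δ F H ((t⁻¹ : Hˣ) : H)) key
  simp only [map_mul]
  calc Δ F H (t : H) * Δ F H x * Δ F H ((t⁻¹ : Hˣ) : H)
      = (((t : H) ⊗ₜ[F] (t : H)) * ((((t⁻¹ : Hˣ) : H) ⊗ₜ[F] ((t⁻¹ : Hˣ) : H))
          * Δ F H (t : H) * Δ F H x)) * Δ F H ((t⁻¹ : Hˣ) : H) := by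
        simp only [← mul_assoc]; rw [htt, one_mul]
    _ = (((t : H) ⊗ₜ[F] (t : H)) * (τ F H (Δ F H x)
          * ((((t⁻¹ : Hˣ) : H) ⊗ₜ[F] ((t⁻¹ : Hˣ) : H)) * Δ F H (t : H))))
          * Δ F H ((t⁻¹ : Hˣ) : H) := key2
    _ = (((t : H) ⊗ₜ[F] (t : H)) * τ F H (Δ F H x))
          * (((t⁻¹ : Hˣ) : H) ⊗ₜ[F] ((t⁻¹ : Hˣ) : H)) := by
        simp only [← mul_assoc]; rw [mul_assoc _ (Δ F H (t : H)), hΔt, mul_one]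
end

section
/- Let (H, t) be a half-ribbon Hopf algebra over a field F, with universal R-matrix R = (t⁻¹ ⊗ t⁻¹)·Δ(t), and let u = m∘(S ⊗ id)(τ(R)) be the Drinfeld element. Then u = S(t⁻¹)·t⁻¹. -/
open TensorProduct

/-!
The intertwining property `R·Δ(t) = τ(Δ(t))·R` of `R = (t⁻¹ ⊗ t⁻¹)·Δ(t)` says, after cancelling
`Δ(t)`, that `R = τ(Δ(t))·(t⁻¹ ⊗ t⁻¹)`, hence `τ(R) = Δ(t)·(t⁻¹ ⊗ t⁻¹)`. Since the antipode
reverses products, `m∘(S ⊗ id)(Δ(t)·(t⁻¹ ⊗ t⁻¹)) = S(t⁻¹)·(Σ S(t₁)t₂)·t⁻¹ = ε(t)·S(t⁻¹)·t⁻¹`,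
and the counit axiom `(ε ⊗ id)(R) = 1` reads `ε(t⁻¹) = 1`, so `ε(t) = 1`.
-/

namespace HalfRibbon

open Coalgebra HopfAlgebra

variable {R A : Type*} [CommSemiring R]

theorem comm_mul_eq_mul_comm_of_mul_mul_eq [Semiring A] [Algebra R A] (p d : A ⊗[R] A)
    (hd : IsUnit d) (h : p * d * d = Algebra.TensorProduct.comm R A A d * (p * d)) :
    Algebra.TensorProduct.comm R A A (p * d) = d * Algebra.TensorProduct.comm R A A p := by
  have hpd : p * d = Algebra.TensorProduct.comm R A A d * p :=
    hd.mul_right_cancel (by rw [h, mul_assoc])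
  rw [hpd, map_mul]
  exact congrArg (· * _) (TensorProduct.comm_comm R A A d)

theorem mul'_map_antipode_mul_tmul [Semiring A] [HopfAlgebra R A] (z : A ⊗[R] A) (c d : A) :
    LinearMap.mul' R A (map (antipode R) LinearMap.id (z * (c ⊗ₜ d))) =
      antipode R c * LinearMap.mul' R A (map (antipode R) LinearMap.id z) * d := by
  induction z using TensorProduct.induction_on with
  | zero => simp
  | tmul a b => simp [antipode_mul_antidistrib, mul_assoc]
  | add x y hx hy => simp only [add_mul, map_add, hx, hy, mul_add]

section Bialgebra

variable [Semiring A] [Bialgebra R A]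

theorem lid_map_counit_tmul_mul_comul (a b x : A) :
    Algebra.TensorProduct.lid R A (Algebra.TensorProduct.map (Bialgebra.counitAlgHom R A)
      (AlgHom.id R A) ((a ⊗ₜ b) * Bialgebra.comulAlgHom R A x)) = counit (R := R) a • (b * x) := by
  have hcomul : Algebra.TensorProduct.map (Bialgebra.counitAlgHom R A) (AlgHom.id R A)
      (comul x) = 1 ⊗ₜ x :=
    rTensor_counit_comul x
  rw [map_mul, Bialgebra.comulAlgHom_apply, hcomul]
  simp

theorem algebraMap_counit_eq_one_of_lid_map_counit (t : Aˣ)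
    (h : Algebra.TensorProduct.lid R A (Algebra.TensorProduct.map (Bialgebra.counitAlgHom R A)
      (AlgHom.id R A) (((t⁻¹ : Aˣ) : A) ⊗ₜ ((t⁻¹ : Aˣ) : A) * Bialgebra.comulAlgHom R A t)) = 1) :
    algebraMap R A (counit (t : A)) = 1 := by
  rw [lid_map_counit_tmul_mul_comul, Units.inv_mul, ← Algebra.algebraMap_eq_smul_one] at h
  calc algebraMap R A (counit (t : A))
      = algebraMap R A (counit (t : A)) * algebraMap R A (counit ((t⁻¹ : Aˣ) : A)) := by
        rw [h, mul_one]
    _ = 1 := by rw [← map_mul, ← Bialgebra.counit_mul, Units.mul_inv, Bialgebra.counit_one, map_one]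

end Bialgebra

end HalfRibbon

open HalfRibbon in
/-- For a half-ribbon Hopf algebra `(H, t)` with
`R = (t⁻¹ ⊗ t⁻¹)·Δ(t)`, the Drinfeld element `u = m∘(S ⊗ id)(τ(R))` equals
`S(t⁻¹)·t⁻¹`. -/
theorem halfRibbon_drinfeld_eq
    (F : Type*) [Field F] (H : Type*) [Ring H] [HopfAlgebra F H]
    (t : Hˣ) (ht : IsHalfRibbonElement F H t) :
    drinfeld F H ((((t⁻¹ : Hˣ) : H) ⊗ₜ[F] ((t⁻¹ : Hˣ) : H)) * Δ F H (t : H)) =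
      antipodeS F H ((t⁻¹ : Hˣ) : H) * ((t⁻¹ : Hˣ) : H) := by
  obtain ⟨⟨-, hcomm, -, -, hcounit, -⟩, -⟩ := ht
  have hflip : τ F H ((((t⁻¹ : Hˣ) : H) ⊗ₜ[F] ((t⁻¹ : Hˣ) : H)) * Δ F H (t : H)) =
      Δ F H (t : H) * (((t⁻¹ : Hˣ) : H) ⊗ₜ[F] ((t⁻¹ : Hˣ) : H)) :=
    comm_mul_eq_mul_comm_of_mul_mul_eq _ _ ((Units.map (Δ F H : H →* H ⊗[F] H) t).isUnit)
      (hcomm t)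
  have hsum : LinearMap.mul' F H (map (antipodeS F H) LinearMap.id (Δ F H (t : H))) =
      algebraMap F H (Coalgebra.counit (t : H)) :=
    HopfAlgebra.mul_antipode_rTensor_comul_apply _
  rw [drinfeld, hflip, mul'_map_antipode_mul_tmul, hsum,
    algebraMap_counit_eq_one_of_lid_map_counit t hcounit, mul_one]
end

section
/- Let H be a Hopf algebra over a field F, let R ∈ H ⊗ H be a universal R-matrix, and let v and v′ both be ribbon elements for (H, R). Then the element s := v′·v⁻¹ is a central grouplike element of H with s² = 1; in particular every ribbon element for (H, R) has the form v·s for some central grouplike element s with s² = 1. -/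
open TensorProduct

/-- If `v` and `v′` are both ribbon elements for `(H, R)`, then
`s := v′·v⁻¹` is a central grouplike element with `s² = 1`, and `v′ = v·s`. -/
theorem ribbon_elements_differ_by_central_grouplike
    (F : Type*) [Field F] (H : Type*) [Ring H] [HopfAlgebra F H]
    (R : H ⊗[F] H) (hR : IsUniversalRMatrix F H R)
    (v v' : H) (hv : IsRibbonElement F H R v) (hv' : IsRibbonElement F H R v') :
    IsUnit (v' * Ring.inverse v) ∧
    (∀ x : H, (v' * Ring.inverse v) * x = x * (v' * Ring.inverse v)) ∧
    Δ F H (v' * Ring.inverse v) = (v' * Ring.inverse v) ⊗ₜ[F] (v' * Ring.inverse v) ∧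
    (v' * Ring.inverse v) * (v' * Ring.inverse v) = 1 ∧
    v' = v * (v' * Ring.inverse v) := by
  obtain ⟨hvU, hvc, hv2, -, -, hvΔ⟩ := hv
  obtain ⟨hv'U, hv'c, hv'2, -, -, hv'Δ⟩ := hv'
  obtain ⟨vu, rfl⟩ := hvU
  obtain ⟨Ru, rfl⟩ := hR.1
  rw [Ring.inverse_unit vu] at *
  have hXU : IsUnit (τ F H (↑Ru) * ↑Ru) := ((Ru.isUnit).map (τ F H)).mul Ru.isUnit
  obtain ⟨Xu, hXu⟩ := hXU
  rw [← hXu, Ring.inverse_unit Xu] at hvΔ hv'Δ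
  have hinv : ∀ x : H, (↑vu⁻¹ : H) * x = x * ↑vu⁻¹ := by
    intro x
    calc (↑vu⁻¹ : H) * x = ↑vu⁻¹ * (x * ↑vu) * ↑vu⁻¹ := by
          rw [mul_assoc, mul_assoc, Units.mul_inv, mul_one]
      _ = ↑vu⁻¹ * (↑vu * x) * ↑vu⁻¹ := by rw [hvc x]
      _ = x * ↑vu⁻¹ := by rw [← mul_assoc, Units.inv_mul, one_mul]
  refine ⟨hv'U.mul vu⁻¹.isUnit, ?_, ?_, ?_, ?_⟩
  · intro x
    rw [mul_assoc, hinv x, ← mul_assoc, hv'c x, mul_assoc]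
  · -- grouplike
    have hd : Δ F H ((↑vu⁻¹ : H)) = ↑Xu * ((↑vu⁻¹ : H) ⊗ₜ[F] (↑vu⁻¹ : H)) := by
      have hleft : Δ F H ((↑vu⁻¹ : H)) * Δ F H ((↑vu : H)) = 1 := by
        rw [← map_mul, Units.inv_mul, map_one]
      have hright : Δ F H ((↑vu : H)) * (↑Xu * ((↑vu⁻¹ : H) ⊗ₜ[F] (↑vu⁻¹ : H))) = 1 := by
        rw [hvΔ, mul_assoc, ← mul_assoc (↑Xu⁻¹ : H ⊗[F] H), Units.inv_mul, one_mul,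
          Algebra.TensorProduct.tmul_mul_tmul, Units.mul_inv,
          Algebra.TensorProduct.one_def]
      exact left_inv_eq_right_inv hleft hright
    rw [map_mul, hv'Δ, hd, mul_assoc, ← mul_assoc (↑Xu⁻¹ : H ⊗[F] H), Units.inv_mul,
      one_mul, Algebra.TensorProduct.tmul_mul_tmul]
  · calc v' * ↑vu⁻¹ * (v' * ↑vu⁻¹) = v' * (↑vu⁻¹ * v') * ↑vu⁻¹ := by
          rw [mul_assoc, mul_assoc, mul_assoc]
      _ = v' * v' * (↑vu⁻¹ * ↑vu⁻¹) := by rw [hinv v', mul_assoc, mul_assoc, mul_assoc]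
      _ = ↑vu * ↑vu * (↑vu⁻¹ * ↑vu⁻¹) := by rw [hv'2, hv2]
      _ = 1 := by
          rw [mul_assoc, ← mul_assoc (↑vu : H) (↑vu⁻¹ : H), Units.mul_inv, one_mul,
            Units.mul_inv]
  · rw [← mul_assoc, hvc v', mul_assoc, Units.mul_inv, mul_one]
end

section
/- Let H be a Hopf algebra over a field F and let t₁, t₂ ∈ H be invertible elements such that (t₁⁻¹ ⊗ t₁⁻¹)·Δ(t₁) = (t₂⁻¹ ⊗ t₂⁻¹)·Δ(t₂) in H ⊗ H. Then t₁·t₂⁻¹ is grouplike; that is, Δ(t₁·t₂⁻¹) = (t₁·t₂⁻¹) ⊗ (t₁·t₂⁻¹). -/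
open TensorProduct

/-- If two invertible elements `t₁, t₂` of a Hopf algebra satisfy
`(t₁⁻¹ ⊗ t₁⁻¹)·Δ(t₁) = (t₂⁻¹ ⊗ t₂⁻¹)·Δ(t₂)`, then `t₁·t₂⁻¹` is grouplike. -/
theorem halfRibbon_ratio_grouplike
    (F : Type*) [Field F] (H : Type*) [Ring H] [HopfAlgebra F H]
    (t₁ t₂ : Hˣ)
    (h : (((t₁⁻¹ : Hˣ) : H) ⊗ₜ[F] ((t₁⁻¹ : Hˣ) : H)) * Δ F H (t₁ : H) =
         (((t₂⁻¹ : Hˣ) : H) ⊗ₜ[F] ((t₂⁻¹ : Hˣ) : H)) * Δ F H (t₂ : H)) :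
    Δ F H ((t₁ : H) * ((t₂⁻¹ : Hˣ) : H)) =
      ((t₁ : H) * ((t₂⁻¹ : Hˣ) : H)) ⊗ₜ[F] ((t₁ : H) * ((t₂⁻¹ : Hˣ) : H)) := by
  have h1 : Δ F H (t₁ : H)
      = ((t₁ : H) ⊗ₜ[F] (t₁ : H)) * ((((t₂⁻¹ : Hˣ) : H) ⊗ₜ[F] ((t₂⁻¹ : Hˣ) : H)) * Δ F H (t₂ : H)) := by
    rw [← h, ← mul_assoc, Algebra.TensorProduct.tmul_mul_tmul, Units.mul_inv,
      ← Algebra.TensorProduct.one_def, one_mul]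
  rw [map_mul, h1]
  rw [mul_assoc, mul_assoc, ← map_mul, Units.mul_inv, map_one, mul_one,
    Algebra.TensorProduct.tmul_mul_tmul]
end
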